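/- For each index i, the real function f(t) = ℓ evaluated with the diagonal entry a_i of A replaced by t (keeping all other entries of A, V, μ, ν fixed) is differentiable at t = a_i and its derivative equals (1/2)·Σ_{ii} − ((ν + D)/(2(ν + q)))·r_i², where Σ_{ii} is the (i,i)-entry of Σ = Ω⁻¹ and r_i = y_i − μ_i. -/

import Mathlib

open Matrix

/-- Multivariate t log-likelihood in the low-rank precision parametrization
`Ω = A + V·Vᵀ` with `A = diagonal a`:
`ℓ = log Γ((ν+D)/2) - log Γ(ν/2) - (D/2)·log ν - (D/2)·log π + (1/2)·log(det Ω)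
  - ((ν+D)/2)·log(1 + q/ν)` with `q = (y-μ)ᵀ Ω (y-μ)`. -/
noncomputable def tLRLL (D R : ℕ) (y μ : Fin D → ℝ) (a : Fin D → ℝ)
    (V : Matrix (Fin D) (Fin R) ℝ) (ν : ℝ) : ℝ :=
  Real.log (Real.Gamma ((ν + D) / 2)) - Real.log (Real.Gamma (ν / 2))
    - ((D : ℝ) / 2) * Real.log ν - ((D : ℝ) / 2) * Real.log Real.pi
    + (1 / 2) * Real.log (Matrix.diagonal a + V * V.transpose).det
    - ((ν + D) / 2) *
        Real.log (1 + ((y - μ) ⬝ᵥ (Matrix.diagonal a + V * V.transpose).mulVec (y - μ)) / ν)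

/-! Raising `a i` by `s` adds `s` to the `(i, i)` entry of `Ω`. By cofactor expansion along row
`i`, `det Ω` is then affine in `s` with slope `adj(Ω)ᵢᵢ`, and `q` is affine with slope `rᵢ²`, so
`ℓ` differentiates as two logarithms of affine functions; `Ω⁻¹ = adj Ω / det Ω` turns the first
slope into `Σᵢᵢ`. Positive definiteness of `Ω` keeps `det Ω` and `ν + q` positive. -/

namespace Matrix

variable {n : Type*} [DecidableEq n]

lemma diagonal_update_eq_add_single {α : Type*} [AddCommGroup α] (a : n → α) (i : n) (t : α) :
    diagonal (Function.update a i t) = diagonal a + single i i (t - a i) := by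
  rw [← diagonal_single, diagonal_add]
  congr 1
  ext j
  rcases eq_or_ne j i with rfl | hji
  · simp
  · simp [hji]

variable [Fintype n]

lemma det_add_single_self {R : Type*} [CommRing R] (M : Matrix n n R) (i : n) (s : R) :
    (M + single i i s).det = M.det + s * M.adjugate i i := by
  have hrow : M + single i i s = M.updateRow i (M i + s • Pi.single i 1) := by
    ext j k
    rcases eq_or_ne j i with rfl | hji
    · simp [single_apply, Pi.single_apply, eq_comm]
    · simp [updateRow_ne hji, single_apply_of_row_ne hji.symm]
  rw [hrow, det_updateRow_add, det_updateRow_smul, updateRow_eq_self, adjugate_apply]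

lemma dotProduct_add_single_self_mulVec {R : Type*} [CommRing R] (M : Matrix n n R) (i : n)
    (s : R) (r : n → R) :
    r ⬝ᵥ (M + single i i s) *ᵥ r = r ⬝ᵥ M *ᵥ r + s * r i ^ 2 := by
  rw [add_mulVec, dotProduct_add, single_mulVec_eq, dotProduct_smul, dotProduct_single]
  simp only [smul_eq_mul, mul_one]
  ring

lemma posDef_diagonal_add_mul_transpose {m : Type*} [Fintype m] {a : n → ℝ} (ha : ∀ k, 0 < a k)
    (V : Matrix n m ℝ) : (diagonal a + V * Vᵀ).PosDef :=
  (posDef_diagonal_iff.mpr ha).add_posSemidef (by simpa using posSemidef_self_mul_conjTranspose V)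

end Matrix

section

lemma hasDerivAt_log_add_sub_mul {d : ℝ} (hd : d ≠ 0) (c x : ℝ) :
    HasDerivAt (fun t => Real.log (d + (t - x) * c)) (c / d) x := by
  have h := (((hasDerivAt_id x).sub_const x).mul_const c).const_add d
  simpa using h.log (by simpa using hd)

variable {n : Type*} [Fintype n] [DecidableEq n]

lemma hasDerivAt_log_det_add_single {M : Matrix n n ℝ} (hM : M.det ≠ 0) (i : n) (x : ℝ) :
    HasDerivAt (fun t => Real.log (M + single i i (t - x)).det) (M⁻¹ i i) x := by
  have h := hasDerivAt_log_add_sub_mul hM (M.adjugate i i) x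
  simp only [← det_add_single_self] at h
  rwa [inv_def, Ring.inverse_eq_inv', Matrix.smul_apply, smul_eq_mul, inv_mul_eq_div]

lemma hasDerivAt_log_one_add_dotProduct_add_single_mulVec (M : Matrix n n ℝ) (r : n → ℝ)
    {ν : ℝ} (hν : ν ≠ 0) (hq : ν + r ⬝ᵥ M *ᵥ r ≠ 0) (i : n) (x : ℝ) :
    HasDerivAt (fun t => Real.log (1 + r ⬝ᵥ (M + single i i (t - x)) *ᵥ r / ν))
      (r i ^ 2 / (ν + r ⬝ᵥ M *ᵥ r)) x := by
  have hd : 1 + r ⬝ᵥ M *ᵥ r / ν ≠ 0 := by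
    rwa [one_add_div hν, div_ne_zero_iff, and_iff_left hν]
  convert hasDerivAt_log_add_sub_mul hd (r i ^ 2 / ν) x using 1
  · funext t
    rw [dotProduct_add_single_self_mulVec]
    ring_nf
  · field_simp

end

theorem tLR_deriv_a_general (D R : ℕ) (y μ : Fin D → ℝ) (ν : ℝ) (hν : 0 < ν)
    (a : Fin D → ℝ) (ha : ∀ k, 0 < a k)
    (V : Matrix (Fin D) (Fin R) ℝ) (i : Fin D) :
    HasDerivAt (fun t : ℝ => tLRLL D R y μ (Function.update a i t) V ν)
      ((1 / 2) * ((Matrix.diagonal a + V * V.transpose)⁻¹) i i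
        - (ν + D) /
            (2 * (ν + (y - μ) ⬝ᵥ (Matrix.diagonal a + V * V.transpose).mulVec (y - μ))) *
            (y i - μ i) ^ 2)
      (a i) := by
  set Ω := diagonal a + V * Vᵀ
  have hΩ : Ω.PosDef := posDef_diagonal_add_mul_transpose ha V
  have hq : 0 ≤ (y - μ) ⬝ᵥ Ω *ᵥ (y - μ) := hΩ.posSemidef.dotProduct_mulVec_nonneg _
  have hupdate (t : ℝ) :
      diagonal (Function.update a i t) + V * Vᵀ = Ω + single i i (t - a i) := by
    rw [diagonal_update_eq_add_single, add_right_comm]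
  have hlogdet := hasDerivAt_log_det_add_single hΩ.det_pos.ne' i (a i)
  have hlogq := hasDerivAt_log_one_add_dotProduct_add_single_mulVec Ω (y - μ) hν.ne'
    (by positivity) i (a i)
  simp only [tLRLL, hupdate]
  refine (((hasDerivAt_const _ _).add (hlogdet.const_mul (1 / 2))).sub
    (hlogq.const_mul ((ν + D) / 2))).congr_deriv ?_
  rw [Pi.sub_apply, mul_comm 2, ← div_div]
  ring

/-- First partial derivative of the low-rank multivariate t log-likelihood with respect
to the diagonal entry `a_i`: it equals `(1/2)·Σ_{ii} - ((ν + D)/(2(ν + q)))·r_i²` where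
`Σ = Ω⁻¹`, `r = y - μ` and `q = rᵀ Ω r`. -/
theorem tLR_deriv_a (D R : ℕ) (hD : 1 ≤ D) (y μ : Fin D → ℝ) (ν : ℝ) (hν : 0 < ν)
    (a : Fin D → ℝ) (ha : ∀ k, 0 < a k)
    (V : Matrix (Fin D) (Fin R) ℝ) (i : Fin D) :
    HasDerivAt (fun t : ℝ => tLRLL D R y μ (Function.update a i t) V ν)
      ((1 / 2) * ((Matrix.diagonal a + V * V.transpose)⁻¹) i i
        - (ν + D) /
            (2 * (ν + (y - μ) ⬝ᵥ (Matrix.diagonal a + V * V.transpose).mulVec (y - μ))) *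
            (y i - μ i) ^ 2)
      (a i) :=
  tLR_deriv_a_general D R y μ ν hν a ha V i
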